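/- Let A > 0 and let a, b ∈ X_A^ac. Then d(a,b) = inf { ∫₀¹ max_{i∈{1,2,3}} (|c_i'(t)|/c_i(t)) dt : c : [0,1] → ℝ³ continuously differentiable, c(t) ∈ X_A^ac for all t, c(0) = a, c(1) = b }. In other words, the metric d on the acute part X_A^ac is the length metric associated to the Finsler structure F(a,v) = max_i (|v_i|/a_i). -/

import Mathlib

open Set Filter

noncomputable section

/-- The edge model `X_A`: triples of positive reals satisfying the strict triangle
inequalities and having Heron area `A`. -/
def X (A : ℝ) : Set (Fin 3 → ℝ) :=
  {a | (∀ i, 0 < a i) ∧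
    (∀ i j k : Fin 3, i ≠ j → j ≠ k → i ≠ k → a i < a j + a k) ∧
    Real.sqrt ((a 0 + a 1 + a 2) * (-a 0 + a 1 + a 2) *
      (a 0 - a 1 + a 2) * (a 0 + a 1 - a 2)) / 4 = A}

/-- The non-obtuse part `X_A^no`. -/
def XNo (A : ℝ) : Set (Fin 3 → ℝ) :=
  {a | a ∈ X A ∧ ∀ i j k : Fin 3, i ≠ j → j ≠ k → i ≠ k → a i ^ 2 ≤ a j ^ 2 + a k ^ 2}

/-- The acute part `X_A^ac`. -/
def XAc (A : ℝ) : Set (Fin 3 → ℝ) :=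
  {a | a ∈ X A ∧ ∀ i j k : Fin 3, i ≠ j → j ≠ k → i ≠ k → a i ^ 2 < a j ^ 2 + a k ^ 2}

/-- The distance `d(a,b) = max_i |log a_i - log b_i|` on the edge model. -/
def dd (a b : Fin 3 → ℝ) : ℝ :=
  max |Real.log (a 0) - Real.log (b 0)|
    (max |Real.log (a 1) - Real.log (b 1)| |Real.log (a 2) - Real.log (b 2)|)

/-- The angle at vertex `i` of the triangle with edge lengths `a`, by the law of cosines. -/
def thetaA (a : Fin 3 → ℝ) (i : Fin 3) : ℝ :=
  Real.arccos ((a (i + 1) ^ 2 + a (i + 2) ^ 2 - a i ^ 2) / (2 * a (i + 1) * a (i + 2)))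

namespace Stmt18Aux

open Real

lemma perm3 {P : Fin 3 → Fin 3 → Fin 3 → Prop}
    (h012 : P 0 1 2) (h021 : P 0 2 1) (h102 : P 1 0 2)
    (h120 : P 1 2 0) (h201 : P 2 0 1) (h210 : P 2 1 0) :
    ∀ i j k : Fin 3, i ≠ j → j ≠ k → i ≠ k → P i j k := by
  intro i j k hij hjk hik
  fin_cases i <;> fin_cases j <;> fin_cases k <;>
    first
    | exact absurd rfl hij
    | exact absurd rfl hjk
    | exact absurd rfl hik
    | exact h012 | exact h021 | exact h102 | exact h120 | exact h201 | exact h210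

/-- Key combinatorial identity: if the x's are not all of the same strict sign,
then `max_i |x_i - (Σx)/2| = (Σ|x_i|)/2`. -/
lemma maxabs (x0 x1 x2 : ℝ) (hmin : x0 ≤ 0 ∨ x1 ≤ 0 ∨ x2 ≤ 0)
    (hmax : 0 ≤ x0 ∨ 0 ≤ x1 ∨ 0 ≤ x2) :
    max |x0 - (x0 + x1 + x2)/2| (max |x1 - (x0 + x1 + x2)/2| |x2 - (x0 + x1 + x2)/2|)
      = (|x0| + |x1| + |x2|)/2 := by
  have B := fun x : ℝ => neg_abs_le x
  have B' := fun x : ℝ => le_abs_self x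
  apply le_antisymm
  · refine max_le ?_ (max_le ?_ ?_) <;>
    · rw [abs_le]
      constructor <;> linarith [B x0, B' x0, B x1, B' x1, B x2, B' x2]
  · rcases le_total x0 0 with h0 | h0 <;> rcases le_total x1 0 with h1 | h1 <;>
      rcases le_total x2 0 with h2 | h2
    · -- all ≤ 0 : use hmax
      rcases hmax with p | p | p
      · refine le_trans ?_ (le_max_left _ _)
        rw [abs_of_nonneg p, abs_of_nonpos h1, abs_of_nonpos h2,
          abs_of_nonneg (by linarith : (0:ℝ) ≤ x0 - (x0 + x1 + x2)/2)]
        linarith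
      · refine le_trans ?_ (le_trans (le_max_left _ _) (le_max_right _ _))
        rw [abs_of_nonpos h0, abs_of_nonneg p, abs_of_nonpos h2,
          abs_of_nonneg (by linarith : (0:ℝ) ≤ x1 - (x0 + x1 + x2)/2)]
        linarith
      · refine le_trans ?_ (le_trans (le_max_right _ _) (le_max_right _ _))
        rw [abs_of_nonpos h0, abs_of_nonpos h1, abs_of_nonneg p,
          abs_of_nonneg (by linarith : (0:ℝ) ≤ x2 - (x0 + x1 + x2)/2)]
        linarith
    · refine le_trans ?_ (le_trans (le_max_right _ _) (le_max_right _ _))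
      rw [abs_of_nonpos h0, abs_of_nonpos h1, abs_of_nonneg h2,
        abs_of_nonneg (by linarith : (0:ℝ) ≤ x2 - (x0 + x1 + x2)/2)]
      linarith
    · refine le_trans ?_ (le_trans (le_max_left _ _) (le_max_right _ _))
      rw [abs_of_nonpos h0, abs_of_nonneg h1, abs_of_nonpos h2,
        abs_of_nonneg (by linarith : (0:ℝ) ≤ x1 - (x0 + x1 + x2)/2)]
      linarith
    · refine le_trans ?_ (le_max_left _ _)
      rw [abs_of_nonpos h0, abs_of_nonneg h1, abs_of_nonneg h2,
        abs_of_nonpos (by linarith : x0 - (x0 + x1 + x2)/2 ≤ 0)]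
      linarith
    · refine le_trans ?_ (le_max_left _ _)
      rw [abs_of_nonneg h0, abs_of_nonpos h1, abs_of_nonpos h2,
        abs_of_nonneg (by linarith : (0:ℝ) ≤ x0 - (x0 + x1 + x2)/2)]
      linarith
    · refine le_trans ?_ (le_trans (le_max_left _ _) (le_max_right _ _))
      rw [abs_of_nonneg h0, abs_of_nonpos h1, abs_of_nonneg h2,
        abs_of_nonpos (by linarith : x1 - (x0 + x1 + x2)/2 ≤ 0)]
      linarith
    · refine le_trans ?_ (le_trans (le_max_right _ _) (le_max_right _ _))
      rw [abs_of_nonneg h0, abs_of_nonneg h1, abs_of_nonpos h2,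
        abs_of_nonpos (by linarith : x2 - (x0 + x1 + x2)/2 ≤ 0)]
      linarith
    · -- all ≥ 0 : use hmin
      rcases hmin with p | p | p
      · refine le_trans ?_ (le_max_left _ _)
        rw [abs_of_nonpos p, abs_of_nonneg h1, abs_of_nonneg h2,
          abs_of_nonpos (by linarith : x0 - (x0 + x1 + x2)/2 ≤ 0)]
        linarith
      · refine le_trans ?_ (le_trans (le_max_left _ _) (le_max_right _ _))
        rw [abs_of_nonneg h0, abs_of_nonpos p, abs_of_nonneg h2,
          abs_of_nonpos (by linarith : x1 - (x0 + x1 + x2)/2 ≤ 0)]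
        linarith
      · refine le_trans ?_ (le_trans (le_max_right _ _) (le_max_right _ _))
        rw [abs_of_nonneg h0, abs_of_nonneg h1, abs_of_nonpos p,
          abs_of_nonpos (by linarith : x2 - (x0 + x1 + x2)/2 ≤ 0)]
        linarith

lemma sinsq (v w : ℝ) :
    sin v ^ 2 + sin w ^ 2 - sin (v + w) ^ 2 = -(2 * sin v * sin w * cos (v + w)) := by
  rw [sin_add, cos_add]
  linear_combination (- sin v ^ 2) * sin_sq_add_cos_sq w + (- sin w ^ 2) * sin_sq_add_cos_sq v

/-- Triangle inequality for sines of angles of an acute triangle. -/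
lemma tri_sin {u v w : ℝ} (hu : u ∈ Set.Ioo 0 (π/2)) (hv : v ∈ Set.Ioo 0 (π/2))
    (hw : w ∈ Set.Ioo 0 (π/2)) (hsum : u + v + w = π) :
    sin u < sin v + sin w := by
  obtain ⟨hv1, hv2⟩ := hv; obtain ⟨hw1, hw2⟩ := hw; obtain ⟨hu1, hu2⟩ := hu
  have hpi := pi_pos
  have hcv : cos v < 1 := by
    refine lt_of_le_of_ne (cos_le_one v) fun h => ?_
    have := (cos_eq_one_iff_of_lt_of_lt (x := v) (by linarith) (by linarith)).mp h
    exact absurd this (ne_of_gt hv1)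
  have hcw : cos w < 1 := by
    refine lt_of_le_of_ne (cos_le_one w) fun h => ?_
    have := (cos_eq_one_iff_of_lt_of_lt (x := w) (by linarith) (by linarith)).mp h
    exact absurd this (ne_of_gt hw1)
  have hsv : 0 < sin v := sin_pos_of_pos_of_lt_pi hv1 (by linarith)
  have hsw : 0 < sin w := sin_pos_of_pos_of_lt_pi hw1 (by linarith)
  have hu' : u = π - (v + w) := by linarith
  rw [hu', sin_pi_sub, sin_add]
  nlinarith [mul_pos hsv (sub_pos.mpr hcw), mul_pos hsw (sub_pos.mpr hcv)]

lemma tri_sin_sq {u v w : ℝ} (hu : u ∈ Set.Ioo 0 (π/2)) (hv : v ∈ Set.Ioo 0 (π/2))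
    (hw : w ∈ Set.Ioo 0 (π/2)) (hsum : u + v + w = π) :
    sin u ^ 2 < sin v ^ 2 + sin w ^ 2 := by
  obtain ⟨hv1, hv2⟩ := hv; obtain ⟨hw1, hw2⟩ := hw; obtain ⟨hu1, hu2⟩ := hu
  have hpi := pi_pos
  have hsv : 0 < sin v := sin_pos_of_pos_of_lt_pi hv1 (by linarith)
  have hsw : 0 < sin w := sin_pos_of_pos_of_lt_pi hw1 (by linarith)
  have hcu : 0 < cos u := cos_pos_of_mem_Ioo ⟨by linarith, hu2⟩
  have hu' : u = π - (v + w) := by linarith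
  have hc : cos (v + w) = - cos u := by rw [hu', cos_pi_sub, neg_neg]
  have h1 := sinsq v w
  rw [hc] at h1
  have h2 : sin u ^ 2 = sin (v + w) ^ 2 := by rw [hu', sin_pi_sub]
  nlinarith [mul_pos (mul_pos hsv hsw) hcu]

lemma heron_sin {u v w : ℝ} (hsum : u + v + w = π) :
    (sin u + sin v + sin w) * (-sin u + sin v + sin w) * (sin u - sin v + sin w) *
      (sin u + sin v - sin w) = 4 * (sin u * sin v * sin w)^2 := by
  have hu' : u = π - (v + w) := by linarith
  have h2 : sin u = sin (v + w) := by rw [hu', sin_pi_sub]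
  rw [h2]
  have h1 := sinsq v w
  have h3 := sin_sq_add_cos_sq (v + w)
  linear_combination (-(sin v^2 + sin w^2 - sin (v+w)^2) + 2*sin v*sin w*cos (v+w)) * h1 +
    (-(4 * sin v^2 * sin w^2)) * h3

/-- Core computation for one angle. -/
lemma angle_core {A e0 e1 e2 : ℝ} (hA : 0 < A) (h1 : 0 < e1) (h2 : 0 < e2)
    (t2 : e1 < e2 + e0) (t3 : e2 < e0 + e1)
    (hac : e0^2 < e1^2 + e2^2)
    (hprod : (e0+e1+e2)*(-e0+e1+e2)*(e0-e1+e2)*(e0+e1-e2) = 16*A^2) :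
    Real.arccos ((e1^2 + e2^2 - e0^2)/(2*e1*e2)) ∈ Set.Ioo 0 (π/2) ∧
    Real.sin (Real.arccos ((e1^2 + e2^2 - e0^2)/(2*e1*e2))) = 2*A/(e1*e2) ∧
    Real.cos (Real.arccos ((e1^2 + e2^2 - e0^2)/(2*e1*e2))) = (e1^2 + e2^2 - e0^2)/(2*e1*e2) := by
  have h12 : 0 < 2*e1*e2 := by positivity
  have hr0 : 0 < (e1^2 + e2^2 - e0^2)/(2*e1*e2) := div_pos (by linarith) h12
  have hr1 : (e1^2 + e2^2 - e0^2)/(2*e1*e2) < 1 := by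
    rw [div_lt_one h12]
    nlinarith
  refine ⟨⟨arccos_pos.mpr hr1, arccos_lt_pi_div_two.mpr hr0⟩, ?_, cos_arccos (by linarith) hr1.le⟩
  rw [sin_arccos]
  have hqq : (2*e1*e2)^2 - (e1^2+e2^2-e0^2)^2 = 16*A^2 := by linear_combination hprod
  have key : 1 - ((e1^2 + e2^2 - e0^2)/(2*e1*e2))^2 = (2*A/(e1*e2))^2 := by
    field_simp
    linear_combination hqq
  rw [key, Real.sqrt_sq (by positivity)]

/-- Endpoint facts about the angles of an acute triangle. -/
lemma endpoint_facts {A : ℝ} (hA : 0 < A) {e : Fin 3 → ℝ} (he : e ∈ XAc A) :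
    (∀ i, thetaA e i ∈ Set.Ioo 0 (π/2)) ∧
    (Real.sin (thetaA e 0) = 2*A/(e 1 * e 2)) ∧
    (Real.sin (thetaA e 1) = 2*A/(e 2 * e 0)) ∧
    (Real.sin (thetaA e 2) = 2*A/(e 0 * e 1)) ∧
    (thetaA e 0 + thetaA e 1 + thetaA e 2 = π) := by
  obtain ⟨⟨hpos, htri, harea⟩, hacute⟩ := he
  have h0 := hpos 0; have h1 := hpos 1; have h2 := hpos 2
  have t012 : e 0 < e 1 + e 2 := htri 0 1 2 (by decide) (by decide) (by decide)
  have t120 : e 1 < e 2 + e 0 := htri 1 2 0 (by decide) (by decide) (by decide)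
  have t201 : e 2 < e 0 + e 1 := htri 2 0 1 (by decide) (by decide) (by decide)
  have a012 : e 0 ^ 2 < e 1 ^ 2 + e 2 ^ 2 := hacute 0 1 2 (by decide) (by decide) (by decide)
  have a120 : e 1 ^ 2 < e 2 ^ 2 + e 0 ^ 2 := hacute 1 2 0 (by decide) (by decide) (by decide)
  have a201 : e 2 ^ 2 < e 0 ^ 2 + e 1 ^ 2 := hacute 2 0 1 (by decide) (by decide) (by decide)
  have hprodnn : 0 ≤ (e 0 + e 1 + e 2) * (-e 0 + e 1 + e 2) * (e 0 - e 1 + e 2) * (e 0 + e 1 - e 2) := by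
    have : (0:ℝ) < (e 0 + e 1 + e 2) * (-e 0 + e 1 + e 2) * (e 0 - e 1 + e 2) * (e 0 + e 1 - e 2) := by
      apply mul_pos (mul_pos (mul_pos (by linarith) (by linarith)) (by linarith)) (by linarith)
    linarith
  have hprod : (e 0 + e 1 + e 2) * (-e 0 + e 1 + e 2) * (e 0 - e 1 + e 2) * (e 0 + e 1 - e 2)
      = 16 * A ^ 2 := by
    have hs : Real.sqrt ((e 0 + e 1 + e 2) * (-e 0 + e 1 + e 2) * (e 0 - e 1 + e 2) *
        (e 0 + e 1 - e 2)) = 4 * A := by linarith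
    calc (e 0 + e 1 + e 2) * (-e 0 + e 1 + e 2) * (e 0 - e 1 + e 2) * (e 0 + e 1 - e 2)
        = Real.sqrt ((e 0 + e 1 + e 2) * (-e 0 + e 1 + e 2) * (e 0 - e 1 + e 2) *
          (e 0 + e 1 - e 2)) ^ 2 := (Real.sq_sqrt hprodnn).symm
      _ = (4 * A) ^ 2 := by rw [hs]
      _ = 16 * A ^ 2 := by ring
  have hth0 : thetaA e 0 = Real.arccos ((e 1 ^ 2 + e 2 ^ 2 - e 0 ^ 2) / (2 * e 1 * e 2)) := rfl
  have hth1 : thetaA e 1 = Real.arccos ((e 2 ^ 2 + e 0 ^ 2 - e 1 ^ 2) / (2 * e 2 * e 0)) := rfl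
  have hth2 : thetaA e 2 = Real.arccos ((e 0 ^ 2 + e 1 ^ 2 - e 2 ^ 2) / (2 * e 0 * e 1)) := rfl
  obtain ⟨m0, s0, c0⟩ := angle_core hA h1 h2 t120 t201 a012 hprod
  obtain ⟨m1, s1, c1⟩ := angle_core hA h2 h0 t201 t012 a120 (by linear_combination hprod)
  obtain ⟨m2, s2, c2⟩ := angle_core hA h0 h1 t012 t120 a201 (by linear_combination hprod)
  rw [hth0, hth1, hth2]
  refine ⟨?_, s0, s1, s2, ?_⟩
  · intro i
    fin_cases i
    · exact m0
    · exact m1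
    · exact m2
  · -- sum of angles is π
    set th0 := Real.arccos ((e 1 ^ 2 + e 2 ^ 2 - e 0 ^ 2) / (2 * e 1 * e 2)) with hdef0
    set th1 := Real.arccos ((e 2 ^ 2 + e 0 ^ 2 - e 1 ^ 2) / (2 * e 2 * e 0)) with hdef1
    set th2 := Real.arccos ((e 0 ^ 2 + e 1 ^ 2 - e 2 ^ 2) / (2 * e 0 * e 1)) with hdef2
    have hpi := pi_pos
    have key : (e 1 ^ 2 + e 2 ^ 2 - e 0 ^ 2) * (e 2 ^ 2 + e 0 ^ 2 - e 1 ^ 2) - 16 * A ^ 2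
        = -(2 * (e 2 ^ 2) * (e 0 ^ 2 + e 1 ^ 2 - e 2 ^ 2)) := by linear_combination hprod
    have c01 : Real.cos (th0 + th1) = Real.cos (π - th2) := by
      rw [Real.cos_add, Real.cos_pi_sub, c0, c1, c2, s0, s1]
      field_simp
      linear_combination key
    have heq : th0 + th1 = π - th2 := by
      apply Real.injOn_cos ⟨by linarith [m0.1, m1.1], by linarith [m0.2, m1.2]⟩
        ⟨by linarith [m2.2], by linarith [m2.1]⟩ c01
    linarith

/-- The log of an edge in terms of the angles. -/
lemma log_edge {A : ℝ} (hA : 0 < A) {e : Fin 3 → ℝ} (he : e ∈ XAc A) (i : Fin 3) :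
    Real.log (e i) = Real.log (2*A)/2 + Real.log (Real.sin (thetaA e i)) -
      (Real.log (Real.sin (thetaA e 0)) + Real.log (Real.sin (thetaA e 1)) +
       Real.log (Real.sin (thetaA e 2)))/2 := by
  obtain ⟨hm, s0, s1, s2, hsum⟩ := endpoint_facts hA he
  have hpos := he.1.1
  have h2A : (2*A) ≠ 0 := by positivity
  have l0 : Real.log (Real.sin (thetaA e 0)) = Real.log (2*A) - (Real.log (e 1) + Real.log (e 2)) := by
    rw [s0, Real.log_div h2A (ne_of_gt (mul_pos (hpos 1) (hpos 2))),
      Real.log_mul (ne_of_gt (hpos 1)) (ne_of_gt (hpos 2))]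
  have l1 : Real.log (Real.sin (thetaA e 1)) = Real.log (2*A) - (Real.log (e 2) + Real.log (e 0)) := by
    rw [s1, Real.log_div h2A (ne_of_gt (mul_pos (hpos 2) (hpos 0))),
      Real.log_mul (ne_of_gt (hpos 2)) (ne_of_gt (hpos 0))]
  have l2 : Real.log (Real.sin (thetaA e 2)) = Real.log (2*A) - (Real.log (e 0) + Real.log (e 1)) := by
    rw [s2, Real.log_div h2A (ne_of_gt (mul_pos (hpos 0) (hpos 1))),
      Real.log_mul (ne_of_gt (hpos 0)) (ne_of_gt (hpos 1))]
  have g0 : Real.log (e 0) = Real.log (2*A)/2 + Real.log (Real.sin (thetaA e 0)) -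
      (Real.log (Real.sin (thetaA e 0)) + Real.log (Real.sin (thetaA e 1)) +
       Real.log (Real.sin (thetaA e 2)))/2 := by rw [l0, l1, l2]; ring
  have g1 : Real.log (e 1) = Real.log (2*A)/2 + Real.log (Real.sin (thetaA e 1)) -
      (Real.log (Real.sin (thetaA e 0)) + Real.log (Real.sin (thetaA e 1)) +
       Real.log (Real.sin (thetaA e 2)))/2 := by rw [l0, l1, l2]; ring
  have g2 : Real.log (e 2) = Real.log (2*A)/2 + Real.log (Real.sin (thetaA e 2)) -
      (Real.log (Real.sin (thetaA e 0)) + Real.log (Real.sin (thetaA e 1)) +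
       Real.log (Real.sin (thetaA e 2)))/2 := by rw [l0, l1, l2]; ring
  fin_cases i
  · exact g0
  · exact g1
  · exact g2

/-! ### The angle-linear path -/

/-- angle path -/
def thq (α β : Fin 3 → ℝ) (t : ℝ) (i : Fin 3) : ℝ := α i + t * (β i - α i)

def LL (α β : Fin 3 → ℝ) (t : ℝ) (i : Fin 3) : ℝ :=
  Real.log (Real.sin (thq α β t i)) -
    (Real.log (Real.sin (thq α β t 0)) + Real.log (Real.sin (thq α β t 1)) +
     Real.log (Real.sin (thq α β t 2)))/2

def cpath (A : ℝ) (α β : Fin 3 → ℝ) (t : ℝ) : Fin 3 → ℝ :=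
  fun i => Real.sqrt (2*A) * Real.exp (LL α β t i)

def xq (α β : Fin 3 → ℝ) (t : ℝ) (i : Fin 3) : ℝ :=
  (β i - α i) * (Real.cos (thq α β t i) / Real.sin (thq α β t i))

def gq (α β : Fin 3 → ℝ) (t : ℝ) (i : Fin 3) : ℝ :=
  xq α β t i - (xq α β t 0 + xq α β t 1 + xq α β t 2)/2

def cpath' (A : ℝ) (α β : Fin 3 → ℝ) (t : ℝ) : Fin 3 → ℝ :=
  fun i => cpath A α β t i * gq α β t i

section path
variable {A : ℝ} (hA : 0 < A) {α β : Fin 3 → ℝ}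
  (hα : ∀ i, α i ∈ Set.Ioo 0 (π/2)) (hβ : ∀ i, β i ∈ Set.Ioo 0 (π/2))
  (hsα : α 0 + α 1 + α 2 = π) (hsβ : β 0 + β 1 + β 2 = π)

include hα hβ

lemma thq_mem {t : ℝ} (ht : t ∈ Set.Icc (0:ℝ) 1) (i : Fin 3) :
    thq α β t i ∈ Set.Ioo 0 (π/2) := by
  have h := (convex_Ioo (0:ℝ) (π/2)) (hα i) (hβ i)
    (by linarith [ht.2] : (0:ℝ) ≤ 1 - t) ht.1 (by ring)
  have : (1-t) • α i + t • β i = α i + t * (β i - α i) := by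
    simp only [smul_eq_mul]; ring
  rw [this] at h
  exact h

include hsα hsβ

lemma thq_sum {t : ℝ} : thq α β t 0 + thq α β t 1 + thq α β t 2 = π := by
  simp only [thq]
  linear_combination (1-t) * hsα + t * hsβ

omit hsα hsβ in
lemma logsin_hasDeriv {t : ℝ} (ht : t ∈ Set.Icc (0:ℝ) 1) (j : Fin 3) :
    HasDerivAt (fun s => Real.log (Real.sin (thq α β s j))) (xq α β t j) t := by
  have hθ := thq_mem hα hβ ht j
  have hpi := pi_pos
  have hsin : 0 < Real.sin (thq α β t j) :=
    sin_pos_of_pos_of_lt_pi hθ.1 (by linarith [hθ.2])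
  have hder_th : HasDerivAt (fun s => thq α β s j) (β j - α j) t := by
    simpa only [thq] using (hasDerivAt_mul_const (β j - α j)).const_add (α j)
  have h1 : HasDerivAt (fun s => Real.sin (thq α β s j))
      (Real.cos (thq α β t j) * (β j - α j)) t :=
    hder_th.sin
  have h2 := (Real.hasDerivAt_log (ne_of_gt hsin)).comp t h1
  have : (Real.sin (thq α β t j))⁻¹ * (Real.cos (thq α β t j) * (β j - α j)) = xq α β t j := by
    simp only [xq]
    field_simp
  rw [this] at h2
  exact h2

omit hsα hsβ in
lemma xq_contOn (j : Fin 3) : ContinuousOn (fun t => xq α β t j) (Set.Icc (0:ℝ) 1) := by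
  have hpi := pi_pos
  have hsin : ∀ t ∈ Set.Icc (0:ℝ) 1, 0 < Real.sin (thq α β t j) := by
    intro t ht
    have hθ := thq_mem hα hβ ht j
    exact sin_pos_of_pos_of_lt_pi hθ.1 (by linarith [hθ.2])
  have hcth : Continuous (fun t => thq α β t j) := by
    simp only [thq]
    exact continuous_const.add (continuous_id.mul continuous_const)
  simp only [xq]
  exact continuousOn_const.mul
    (((Real.continuous_cos.comp hcth).continuousOn).div
      ((Real.continuous_sin.comp hcth).continuousOn) (fun t ht => ne_of_gt (hsin t ht)))

lemma cpath_hasDeriv {t : ℝ} (ht : t ∈ Set.Icc (0:ℝ) 1) (i : Fin 3) :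
    HasDerivAt (fun s => cpath A α β s i) (cpath' A α β t i) t := by
  have hθ : ∀ j, thq α β t j ∈ Set.Ioo 0 (π/2) := fun j => thq_mem hα hβ ht j
  have hpi := pi_pos
  have hsin : ∀ j, 0 < Real.sin (thq α β t j) := fun j =>
    sin_pos_of_pos_of_lt_pi (hθ j).1 (by linarith [(hθ j).2])
  have hder_th : ∀ j, HasDerivAt (fun s => thq α β s j) (β j - α j) t := by
    intro j
    simpa only [thq] using (hasDerivAt_mul_const (β j - α j)).const_add (α j)
  have hder_ls : ∀ j, HasDerivAt (fun s => Real.log (Real.sin (thq α β s j))) (xq α β t j) t :=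
    fun j => logsin_hasDeriv hα hβ ht j
  have hder_L : HasDerivAt (fun s => LL α β s i) (gq α β t i) t := by
    simp only [LL, gq]
    exact (hder_ls i).sub ((((hder_ls 0).add (hder_ls 1)).add (hder_ls 2)).div_const 2)
  have h3 : HasDerivAt (fun s => cpath A α β s i)
      (Real.sqrt (2*A) * (Real.exp (LL α β t i) * gq α β t i)) t := by
    simp only [cpath]
    exact (hder_L.exp).const_mul (Real.sqrt (2*A))
  have : Real.sqrt (2*A) * (Real.exp (LL α β t i) * gq α β t i) = cpath' A α β t i := by
    simp only [cpath', cpath]; ring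
  rw [this] at h3
  exact h3

lemma cpath'_contOn : ContinuousOn (fun t => cpath' A α β t) (Set.Icc (0:ℝ) 1) := by
  have hpi := pi_pos
  have hsin : ∀ j, ∀ t ∈ Set.Icc (0:ℝ) 1, 0 < Real.sin (thq α β t j) := by
    intro j t ht
    have hθ := thq_mem hα hβ ht j
    exact sin_pos_of_pos_of_lt_pi hθ.1 (by linarith [hθ.2])
  have hcth : ∀ j, Continuous (fun t => thq α β t j) := by
    intro j
    simp only [thq]
    exact continuous_const.add (continuous_id.mul continuous_const)
  have hcsin : ∀ j, Continuous (fun t => Real.sin (thq α β t j)) :=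
    fun j => Real.continuous_sin.comp (hcth j)
  have hccos : ∀ j, Continuous (fun t => Real.cos (thq α β t j)) :=
    fun j => Real.continuous_cos.comp (hcth j)
  have hcls : ∀ j, ContinuousOn (fun t => Real.log (Real.sin (thq α β t j))) (Set.Icc (0:ℝ) 1) :=
    fun j => ContinuousOn.log (hcsin j).continuousOn
      (fun t ht => ne_of_gt (hsin j t ht))
  have hcx : ∀ j, ContinuousOn (fun t => xq α β t j) (Set.Icc (0:ℝ) 1) := by
    intro j
    simp only [xq]
    exact continuousOn_const.mul (((hccos j).continuousOn).div ((hcsin j).continuousOn)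
      (fun t ht => ne_of_gt (hsin j t ht)))
  have hcg : ∀ j, ContinuousOn (fun t => gq α β t j) (Set.Icc (0:ℝ) 1) := by
    intro j
    simp only [gq]
    exact (hcx j).sub ((((hcx 0).add (hcx 1)).add (hcx 2)).div_const 2)
  have hcL : ∀ j, ContinuousOn (fun t => LL α β t j) (Set.Icc (0:ℝ) 1) := by
    intro j
    simp only [LL]
    exact (hcls j).sub ((((hcls 0).add (hcls 1)).add (hcls 2)).div_const 2)
  have hcc : ∀ j, ContinuousOn (fun t => cpath A α β t j) (Set.Icc (0:ℝ) 1) := by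
    intro j
    simp only [cpath]
    exact continuousOn_const.mul (Real.continuous_exp.comp_continuousOn (hcL j))
  rw [continuousOn_pi]
  intro j
  simp only [cpath']
  exact (hcc j).mul (hcg j)

set_option maxHeartbeats 2000000 in
lemma cpath_mem (hA : 0 < A) {t : ℝ} (ht : t ∈ Set.Icc (0:ℝ) 1) : cpath A α β t ∈ XAc A := by
  have hpi := pi_pos
  have hθ : ∀ j, thq α β t j ∈ Set.Ioo 0 (π/2) := fun j => thq_mem hα hβ ht j
  have hsin : ∀ j, 0 < Real.sin (thq α β t j) := fun j =>
    sin_pos_of_pos_of_lt_pi (hθ j).1 (by linarith [(hθ j).2])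
  have hsum := thq_sum hα hβ hsα hsβ (t := t)
  have hp : 0 < Real.sin (thq α β t 0) * Real.sin (thq α β t 1) * Real.sin (thq α β t 2) :=
    mul_pos (mul_pos (hsin 0) (hsin 1)) (hsin 2)
  set l := Real.sqrt (2*A) / Real.sqrt (Real.sin (thq α β t 0) * Real.sin (thq α β t 1) * Real.sin (thq α β t 2)) with hl
  have hlpos : 0 < l := div_pos (Real.sqrt_pos.mpr (by linarith)) (Real.sqrt_pos.mpr hp)
  have hrw : ∀ j, cpath A α β t j = l * Real.sin (thq α β t j) := by
    intro j
    simp only [cpath, LL]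
    have hlog : Real.log (Real.sin (thq α β t 0)) + Real.log (Real.sin (thq α β t 1)) + Real.log (Real.sin (thq α β t 2))
        = Real.log (Real.sin (thq α β t 0) * Real.sin (thq α β t 1) * Real.sin (thq α β t 2)) := by
      rw [Real.log_mul (ne_of_gt (mul_pos (hsin 0) (hsin 1))) (ne_of_gt (hsin 2)),
        Real.log_mul (ne_of_gt (hsin 0)) (ne_of_gt (hsin 1))]
    rw [hlog, ← Real.log_sqrt hp.le, Real.exp_sub, Real.exp_log (hsin j),
      Real.exp_log (Real.sqrt_pos.mpr hp), hl]
    ring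
  have hl2 : l^2 = 2*A/(Real.sin (thq α β t 0) * Real.sin (thq α β t 1) * Real.sin (thq α β t 2)) := by
    rw [hl, div_pow, Real.sq_sqrt (by linarith : (0:ℝ) ≤ 2*A), Real.sq_sqrt hp.le]
  have tri0 : Real.sin (thq α β t 0) < Real.sin (thq α β t 1) + Real.sin (thq α β t 2) := tri_sin (hθ 0) (hθ 1) (hθ 2) (by linarith)
  have tri1 : Real.sin (thq α β t 1) < Real.sin (thq α β t 2) + Real.sin (thq α β t 0) := tri_sin (hθ 1) (hθ 2) (hθ 0) (by linarith)
  have tri2 : Real.sin (thq α β t 2) < Real.sin (thq α β t 0) + Real.sin (thq α β t 1) := tri_sin (hθ 2) (hθ 0) (hθ 1) (by linarith)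
  have ac0 : Real.sin (thq α β t 0)^2 < Real.sin (thq α β t 1)^2 + Real.sin (thq α β t 2)^2 := tri_sin_sq (hθ 0) (hθ 1) (hθ 2) (by linarith)
  have ac1 : Real.sin (thq α β t 1)^2 < Real.sin (thq α β t 2)^2 + Real.sin (thq α β t 0)^2 := tri_sin_sq (hθ 1) (hθ 2) (hθ 0) (by linarith)
  have ac2 : Real.sin (thq α β t 2)^2 < Real.sin (thq α β t 0)^2 + Real.sin (thq α β t 1)^2 := tri_sin_sq (hθ 2) (hθ 0) (hθ 1) (by linarith)
  have c012 : cpath A α β t 0 < cpath A α β t 1 + cpath A α β t 2 := by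
    rw [hrw 0, hrw 1, hrw 2]
    nlinarith [mul_pos hlpos (sub_pos.mpr tri0)]
  have c021 : cpath A α β t 0 < cpath A α β t 2 + cpath A α β t 1 := by
    rw [hrw 0, hrw 2, hrw 1]
    nlinarith [mul_pos hlpos (sub_pos.mpr tri0)]
  have c102 : cpath A α β t 1 < cpath A α β t 0 + cpath A α β t 2 := by
    rw [hrw 1, hrw 0, hrw 2]
    nlinarith [mul_pos hlpos (sub_pos.mpr tri1)]
  have c120 : cpath A α β t 1 < cpath A α β t 2 + cpath A α β t 0 := by
    rw [hrw 1, hrw 2, hrw 0]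
    nlinarith [mul_pos hlpos (sub_pos.mpr tri1)]
  have c201 : cpath A α β t 2 < cpath A α β t 0 + cpath A α β t 1 := by
    rw [hrw 2, hrw 0, hrw 1]
    nlinarith [mul_pos hlpos (sub_pos.mpr tri2)]
  have c210 : cpath A α β t 2 < cpath A α β t 1 + cpath A α β t 0 := by
    rw [hrw 2, hrw 1, hrw 0]
    nlinarith [mul_pos hlpos (sub_pos.mpr tri2)]
  have d012 : cpath A α β t 0 ^ 2 < cpath A α β t 1 ^ 2 + cpath A α β t 2 ^ 2 := by
    rw [hrw 0, hrw 1, hrw 2]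
    nlinarith [mul_pos (mul_pos hlpos hlpos) (sub_pos.mpr ac0)]
  have d021 : cpath A α β t 0 ^ 2 < cpath A α β t 2 ^ 2 + cpath A α β t 1 ^ 2 := by
    rw [hrw 0, hrw 2, hrw 1]
    nlinarith [mul_pos (mul_pos hlpos hlpos) (sub_pos.mpr ac0)]
  have d102 : cpath A α β t 1 ^ 2 < cpath A α β t 0 ^ 2 + cpath A α β t 2 ^ 2 := by
    rw [hrw 1, hrw 0, hrw 2]
    nlinarith [mul_pos (mul_pos hlpos hlpos) (sub_pos.mpr ac1)]
  have d120 : cpath A α β t 1 ^ 2 < cpath A α β t 2 ^ 2 + cpath A α β t 0 ^ 2 := by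
    rw [hrw 1, hrw 2, hrw 0]
    nlinarith [mul_pos (mul_pos hlpos hlpos) (sub_pos.mpr ac1)]
  have d201 : cpath A α β t 2 ^ 2 < cpath A α β t 0 ^ 2 + cpath A α β t 1 ^ 2 := by
    rw [hrw 2, hrw 0, hrw 1]
    nlinarith [mul_pos (mul_pos hlpos hlpos) (sub_pos.mpr ac2)]
  have d210 : cpath A α β t 2 ^ 2 < cpath A α β t 1 ^ 2 + cpath A α β t 0 ^ 2 := by
    rw [hrw 2, hrw 1, hrw 0]
    nlinarith [mul_pos (mul_pos hlpos hlpos) (sub_pos.mpr ac2)]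
  have harea : Real.sqrt ((cpath A α β t 0 + cpath A α β t 1 + cpath A α β t 2) *
      (-cpath A α β t 0 + cpath A α β t 1 + cpath A α β t 2) *
      (cpath A α β t 0 - cpath A α β t 1 + cpath A α β t 2) *
      (cpath A α β t 0 + cpath A α β t 1 - cpath A α β t 2)) / 4 = A := by
    rw [hrw 0, hrw 1, hrw 2]
    have hh := heron_sin (u := thq α β t 0) (v := thq α β t 1) (w := thq α β t 2) (by linarith)
    have hprodc : (l*Real.sin (thq α β t 0) + l*Real.sin (thq α β t 1) + l*Real.sin (thq α β t 2)) * (-(l*Real.sin (thq α β t 0)) + l*Real.sin (thq α β t 1) + l*Real.sin (thq α β t 2)) *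
        (l*Real.sin (thq α β t 0) - l*Real.sin (thq α β t 1) + l*Real.sin (thq α β t 2)) * (l*Real.sin (thq α β t 0) + l*Real.sin (thq α β t 1) - l*Real.sin (thq α β t 2)) = (4*A)^2 := by
      have e1 : (l*Real.sin (thq α β t 0) + l*Real.sin (thq α β t 1) + l*Real.sin (thq α β t 2)) * (-(l*Real.sin (thq α β t 0)) + l*Real.sin (thq α β t 1) + l*Real.sin (thq α β t 2)) *
          (l*Real.sin (thq α β t 0) - l*Real.sin (thq α β t 1) + l*Real.sin (thq α β t 2)) * (l*Real.sin (thq α β t 0) + l*Real.sin (thq α β t 1) - l*Real.sin (thq α β t 2))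
          = (l^2)^2 * ((Real.sin (thq α β t 0) + Real.sin (thq α β t 1) + Real.sin (thq α β t 2)) * (-Real.sin (thq α β t 0) + Real.sin (thq α β t 1) + Real.sin (thq α β t 2)) *
            (Real.sin (thq α β t 0) - Real.sin (thq α β t 1) + Real.sin (thq α β t 2)) * (Real.sin (thq α β t 0) + Real.sin (thq α β t 1) - Real.sin (thq α β t 2))) := by ring
      rw [e1, hh, hl2]
      field_simp [(hsin 0).ne', (hsin 1).ne', (hsin 2).ne']
      ring
    calc Real.sqrt ((l*Real.sin (thq α β t 0) + l*Real.sin (thq α β t 1) + l*Real.sin (thq α β t 2)) * (-(l*Real.sin (thq α β t 0)) + l*Real.sin (thq α β t 1) + l*Real.sin (thq α β t 2)) *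
        (l*Real.sin (thq α β t 0) - l*Real.sin (thq α β t 1) + l*Real.sin (thq α β t 2)) * (l*Real.sin (thq α β t 0) + l*Real.sin (thq α β t 1) - l*Real.sin (thq α β t 2))) / 4
        = Real.sqrt ((4*A)^2) / 4 := by rw [hprodc]
      _ = A := by rw [Real.sqrt_sq (by linarith : (0:ℝ) ≤ 4*A)]; ring
  refine ⟨⟨fun i => ?_, ?_, harea⟩, ?_⟩
  · rw [hrw i]
    exact mul_pos hlpos (hsin i)
  · exact perm3 (P := fun i j k => cpath A α β t i < cpath A α β t j + cpath A α β t k)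
      c012 c021 c102 c120 c201 c210
  · exact perm3 (P := fun i j k => cpath A α β t i ^ 2 < cpath A α β t j ^ 2 + cpath A α β t k ^ 2)
      d012 d021 d102 d120 d201 d210

lemma cpath_integral (hAp : 0 < A) :
    (∫ t in (0:ℝ)..1, max (|cpath' A α β t 0| / cpath A α β t 0)
      (max (|cpath' A α β t 1| / cpath A α β t 1) (|cpath' A α β t 2| / cpath A α β t 2)))
    = (|Real.log (Real.sin (β 0)) - Real.log (Real.sin (α 0))| +
       |Real.log (Real.sin (β 1)) - Real.log (Real.sin (α 1))| +
       |Real.log (Real.sin (β 2)) - Real.log (Real.sin (α 2))|) / 2 := by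
  have hpi := pi_pos
  have hUI : Set.uIcc (0:ℝ) 1 = Set.Icc 0 1 := Set.uIcc_of_le (by norm_num)
  have hd1 : (β 0 - α 0) ≤ 0 ∨ (β 1 - α 1) ≤ 0 ∨ (β 2 - α 2) ≤ 0 := by
    by_contra h
    push_neg at h
    linarith [h.1, h.2.1, h.2.2]
  have hd2 : ((0:ℝ) ≤ β 0 - α 0) ∨ ((0:ℝ) ≤ β 1 - α 1) ∨ ((0:ℝ) ≤ β 2 - α 2) := by
    by_contra h
    push_neg at h
    linarith [h.1, h.2.1, h.2.2]
  have hsin : ∀ (j : Fin 3), ∀ t ∈ Set.Icc (0:ℝ) 1, 0 < Real.sin (thq α β t j) := by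
    intro j t ht
    have hθ := thq_mem hα hβ ht j
    exact sin_pos_of_pos_of_lt_pi hθ.1 (by linarith [hθ.2])
  have hcos : ∀ (j : Fin 3), ∀ t ∈ Set.Icc (0:ℝ) 1, 0 < Real.cos (thq α β t j) := by
    intro j t ht
    have hθ := thq_mem hα hβ ht j
    exact Real.cos_pos_of_mem_Ioo ⟨by linarith [hθ.1], hθ.2⟩
  have hxnp : ∀ (j : Fin 3), (β j - α j) ≤ 0 → ∀ t ∈ Set.Icc (0:ℝ) 1, xq α β t j ≤ 0 := by
    intro j hj t ht
    have hq : 0 < Real.cos (thq α β t j) / Real.sin (thq α β t j) :=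
      div_pos (hcos j t ht) (hsin j t ht)
    simp only [xq]
    nlinarith [hq, hj]
  have hxnn : ∀ (j : Fin 3), 0 ≤ (β j - α j) → ∀ t ∈ Set.Icc (0:ℝ) 1, 0 ≤ xq α β t j := by
    intro j hj t ht
    have hq : 0 < Real.cos (thq α β t j) / Real.sin (thq α β t j) :=
      div_pos (hcos j t ht) (hsin j t ht)
    simp only [xq]
    exact mul_nonneg hj hq.le
  have hEq : Set.EqOn (fun t => max (|cpath' A α β t 0| / cpath A α β t 0)
      (max (|cpath' A α β t 1| / cpath A α β t 1) (|cpath' A α β t 2| / cpath A α β t 2)))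
      (fun t => (|xq α β t 0| + |xq α β t 1| + |xq α β t 2|)/2) (Set.uIcc (0:ℝ) 1) := by
    intro t ht
    rw [hUI] at ht
    have hcp : ∀ i : Fin 3, 0 < cpath A α β t i := fun i =>
      mul_pos (Real.sqrt_pos.mpr (by linarith)) (Real.exp_pos _)
    have habs : ∀ i : Fin 3, |cpath' A α β t i| / cpath A α β t i = |gq α β t i| := by
      intro i
      simp only [cpath']
      rw [abs_mul, abs_of_pos (hcp i), mul_div_cancel_left₀ _ (ne_of_gt (hcp i))]
    have hs1 : xq α β t 0 ≤ 0 ∨ xq α β t 1 ≤ 0 ∨ xq α β t 2 ≤ 0 := by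
      rcases hd1 with h | h | h
      · exact Or.inl (hxnp 0 h t ht)
      · exact Or.inr (Or.inl (hxnp 1 h t ht))
      · exact Or.inr (Or.inr (hxnp 2 h t ht))
    have hs2 : 0 ≤ xq α β t 0 ∨ 0 ≤ xq α β t 1 ∨ 0 ≤ xq α β t 2 := by
      rcases hd2 with h | h | h
      · exact Or.inl (hxnn 0 h t ht)
      · exact Or.inr (Or.inl (hxnn 1 h t ht))
      · exact Or.inr (Or.inr (hxnn 2 h t ht))
    show max (|cpath' A α β t 0| / cpath A α β t 0)
      (max (|cpath' A α β t 1| / cpath A α β t 1) (|cpath' A α β t 2| / cpath A α β t 2))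
      = (|xq α β t 0| + |xq α β t 1| + |xq α β t 2|)/2
    rw [habs 0, habs 1, habs 2]
    simpa only [gq] using maxabs (xq α β t 0) (xq α β t 1) (xq α β t 2) hs1 hs2
  rw [intervalIntegral.integral_congr hEq]
  have hIx : ∀ j : Fin 3, IntervalIntegrable (fun t => |xq α β t j|) MeasureTheory.volume 0 1 := by
    intro j
    apply ContinuousOn.intervalIntegrable
    rw [hUI]
    exact (xq_contOn hα hβ j).abs
  have hsplit : (∫ t in (0:ℝ)..1, (|xq α β t 0| + |xq α β t 1| + |xq α β t 2|)/2)
      = ((∫ t in (0:ℝ)..1, |xq α β t 0|) + (∫ t in (0:ℝ)..1, |xq α β t 1|) +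
         (∫ t in (0:ℝ)..1, |xq α β t 2|))/2 := by
    rw [intervalIntegral.integral_div]
    rw [intervalIntegral.integral_add ((hIx 0).add (hIx 1)) (hIx 2),
      intervalIntegral.integral_add (hIx 0) (hIx 1)]
  have hkey : ∀ j : Fin 3, (∫ t in (0:ℝ)..1, |xq α β t j|)
      = |Real.log (Real.sin (β j)) - Real.log (Real.sin (α j))| := by
    intro j
    have hI : IntervalIntegrable (fun t => xq α β t j) MeasureTheory.volume 0 1 := by
      apply ContinuousOn.intervalIntegrable
      rw [hUI]
      exact xq_contOn hα hβ j
    have hFTC : (∫ t in (0:ℝ)..1, xq α β t j)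
        = Real.log (Real.sin (thq α β 1 j)) - Real.log (Real.sin (thq α β 0 j)) :=
      intervalIntegral.integral_eq_sub_of_hasDerivAt
        (fun t ht => logsin_hasDeriv hα hβ (by rwa [hUI] at ht) j) hI
    have h0 : thq α β 0 j = α j := by simp [thq]
    have h1 : thq α β 1 j = β j := by simp only [thq]; ring
    rw [h0, h1] at hFTC
    have hmemα : α j ∈ Set.Icc (-(π/2)) (π/2) := ⟨by linarith [(hα j).1], le_of_lt (hα j).2⟩
    have hmemβ : β j ∈ Set.Icc (-(π/2)) (π/2) := ⟨by linarith [(hβ j).1], le_of_lt (hβ j).2⟩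
    have hsinα : 0 < Real.sin (α j) := sin_pos_of_pos_of_lt_pi (hα j).1 (by linarith [(hα j).2])
    have hsinβ : 0 < Real.sin (β j) := sin_pos_of_pos_of_lt_pi (hβ j).1 (by linarith [(hβ j).2])
    rcases le_total (β j - α j) 0 with hj | hj
    · have hSle : Real.log (Real.sin (β j)) - Real.log (Real.sin (α j)) ≤ 0 := by
        have hm : Real.sin (β j) ≤ Real.sin (α j) :=
          Real.strictMonoOn_sin.monotoneOn hmemβ hmemα (by linarith)
        have := Real.log_le_log hsinβ hm
        linarith
      have heq2 : (∫ t in (0:ℝ)..1, |xq α β t j|) = ∫ t in (0:ℝ)..1, -(xq α β t j) := by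
        apply intervalIntegral.integral_congr
        intro t ht
        rw [hUI] at ht
        exact abs_of_nonpos (hxnp j hj t ht)
      rw [heq2, intervalIntegral.integral_neg, hFTC, abs_of_nonpos hSle]
    · have hSge : 0 ≤ Real.log (Real.sin (β j)) - Real.log (Real.sin (α j)) := by
        have hm : Real.sin (α j) ≤ Real.sin (β j) :=
          Real.strictMonoOn_sin.monotoneOn hmemα hmemβ (by linarith)
        have := Real.log_le_log hsinα hm
        linarith
      have heq2 : (∫ t in (0:ℝ)..1, |xq α β t j|) = ∫ t in (0:ℝ)..1, xq α β t j := by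
        apply intervalIntegral.integral_congr
        intro t ht
        rw [hUI] at ht
        exact abs_of_nonneg (hxnn j hj t ht)
      rw [heq2, hFTC, abs_of_nonneg hSge]
  rw [hsplit, hkey 0, hkey 1, hkey 2]

end path

/-- Lower bound: every admissible curve has length at least `dd a b`. -/
lemma lower_bound {A : ℝ} (hA : 0 < A) {a b : Fin 3 → ℝ}
    (ha : a ∈ XAc A) (hb : b ∈ XAc A) {c c' : ℝ → (Fin 3 → ℝ)}
    (hderiv : ∀ t ∈ Set.Icc (0:ℝ) 1, HasDerivWithinAt c (c' t) (Set.Icc 0 1) t)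
    (hcont : ContinuousOn c' (Set.Icc 0 1))
    (hmem : ∀ t ∈ Set.Icc (0:ℝ) 1, c t ∈ XAc A)
    (h0 : c 0 = a) (h1 : c 1 = b) :
    dd a b ≤ ∫ t in (0:ℝ)..1,
      max (|c' t 0| / c t 0) (max (|c' t 1| / c t 1) (|c' t 2| / c t 2)) := by
  have hUI : Set.uIcc (0:ℝ) 1 = Set.Icc 0 1 := Set.uIcc_of_le (by norm_num)
  have hpos : ∀ t ∈ Set.Icc (0:ℝ) 1, ∀ i, 0 < c t i := fun t ht i => (hmem t ht).1.1 i
  have hcomp : ∀ (i : Fin 3), ∀ t ∈ Set.Icc (0:ℝ) 1,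
      HasDerivWithinAt (fun s => c s i) (c' t i) (Set.Icc 0 1) t :=
    fun i t ht => (hasDerivWithinAt_pi.mp (hderiv t ht)) i
  have hc_cont : ContinuousOn c (Set.Icc (0:ℝ) 1) := fun t ht => (hderiv t ht).continuousWithinAt
  have hci : ∀ i : Fin 3, ContinuousOn (fun t => c t i) (Set.Icc (0:ℝ) 1) :=
    fun i => (continuous_apply i).comp_continuousOn hc_cont
  have hc'i : ∀ i : Fin 3, ContinuousOn (fun t => c' t i) (Set.Icc (0:ℝ) 1) :=
    fun i => (continuous_apply i).comp_continuousOn hcont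
  have hf : ∀ i : Fin 3, ContinuousOn (fun t => c' t i / c t i) (Set.Icc (0:ℝ) 1) :=
    fun i => (hc'i i).div (hci i) (fun t ht => ne_of_gt (hpos t ht i))
  have hfI : ∀ i : Fin 3, IntervalIntegrable (fun t => c' t i / c t i)
      MeasureTheory.volume 0 1 := by
    intro i
    apply ContinuousOn.intervalIntegrable
    rw [hUI]
    exact hf i
  have hgd : ∀ i : Fin 3, ContinuousOn (fun t => |c' t i| / c t i) (Set.Icc (0:ℝ) 1) :=
    fun i => ((hc'i i).abs).div (hci i) (fun t ht => ne_of_gt (hpos t ht i))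
  have hmaxI : IntervalIntegrable (fun t => max (|c' t 0| / c t 0)
      (max (|c' t 1| / c t 1) (|c' t 2| / c t 2))) MeasureTheory.volume 0 1 := by
    apply ContinuousOn.intervalIntegrable
    rw [hUI]
    exact (hgd 0).sup ((hgd 1).sup (hgd 2))
  have hFTC : ∀ i : Fin 3, (∫ t in (0:ℝ)..1, c' t i / c t i)
      = Real.log (b i) - Real.log (a i) := by
    intro i
    have hmain := intervalIntegral.integral_eq_sub_of_hasDeriv_right_of_le
      (f := fun t => Real.log (c t i)) (f' := fun t => c' t i / c t i)
      (by norm_num : (0:ℝ) ≤ 1)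
      (ContinuousOn.log (hci i) (fun t ht => ne_of_gt (hpos t ht i)))
      (by
        intro x hx
        have hIcc : x ∈ Set.Icc (0:ℝ) 1 := ⟨hx.1.le, hx.2.le⟩
        have hd := (hcomp i x hIcc).hasDerivAt (Icc_mem_nhds hx.1 hx.2)
        have hl := (Real.hasDerivAt_log (ne_of_gt (hpos x hIcc i))).comp x hd
        have heq : (c x i)⁻¹ * c' x i = c' x i / c x i := by
          field_simp
        rw [heq] at hl
        exact hl.hasDerivWithinAt)
      (hfI i)
    rw [hmain]
    simp only [h0, h1]
  have hbound : ∀ i : Fin 3, |Real.log (a i) - Real.log (b i)| ≤ ∫ t in (0:ℝ)..1,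
      max (|c' t 0| / c t 0) (max (|c' t 1| / c t 1) (|c' t 2| / c t 2)) := by
    intro i
    rw [abs_sub_comm, ← hFTC i]
    calc |∫ t in (0:ℝ)..1, c' t i / c t i| ≤ ∫ t in (0:ℝ)..1, |c' t i / c t i| :=
        intervalIntegral.abs_integral_le_integral_abs (by norm_num)
      _ ≤ ∫ t in (0:ℝ)..1, max (|c' t 0| / c t 0)
          (max (|c' t 1| / c t 1) (|c' t 2| / c t 2)) := by
        apply intervalIntegral.integral_mono_on (by norm_num) ((hfI i).abs) hmaxI
        intro x hx
        have heq : |c' x i / c x i| = |c' x i| / c x i := by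
          rw [abs_div, abs_of_pos (hpos x hx i)]
        rw [heq]
        fin_cases i
        · exact le_max_left _ _
        · exact le_trans (le_max_left _ _) (le_max_right _ _)
        · exact le_trans (le_max_right _ _) (le_max_right _ _)
  exact max_le (hbound 0) (max_le (hbound 1) (hbound 2))

end Stmt18Aux

/-- On the acute part `X_A^ac`, the distance `d` is the length metric associated to the
Finsler structure `F(a,v) = max_i |v_i|/a_i`. -/
theorem stmt18 (A : ℝ) (hA : 0 < A) (a b : Fin 3 → ℝ)
    (ha : a ∈ XAc A) (hb : b ∈ XAc A) :
    dd a b = sInf {l : ℝ | ∃ c c' : ℝ → (Fin 3 → ℝ),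
      (∀ t ∈ Set.Icc (0:ℝ) 1, HasDerivWithinAt c (c' t) (Set.Icc 0 1) t) ∧
      ContinuousOn c' (Set.Icc 0 1) ∧
      (∀ t ∈ Set.Icc (0:ℝ) 1, c t ∈ XAc A) ∧
      c 0 = a ∧ c 1 = b ∧
      l = ∫ t in (0:ℝ)..1,
        max (|c' t 0| / c t 0) (max (|c' t 1| / c t 1) (|c' t 2| / c t 2))} := by
  obtain ⟨hma, sa0, sa1, sa2, hsuma⟩ := Stmt18Aux.endpoint_facts hA ha
  obtain ⟨hmb, sb0, sb1, sb2, hsumb⟩ := Stmt18Aux.endpoint_facts hA hb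
  have hpi := Real.pi_pos
  have la0 := Stmt18Aux.log_edge hA ha 0
  have la1 := Stmt18Aux.log_edge hA ha 1
  have la2 := Stmt18Aux.log_edge hA ha 2
  have lb0 := Stmt18Aux.log_edge hA hb 0
  have lb1 := Stmt18Aux.log_edge hA hb 1
  have lb2 := Stmt18Aux.log_edge hA hb 2
  have diff0 : Real.log (a 0) - Real.log (b 0) = -((Real.log (Real.sin (thetaA b 0)) - Real.log (Real.sin (thetaA a 0))) - ((Real.log (Real.sin (thetaA b 0)) - Real.log (Real.sin (thetaA a 0))) + (Real.log (Real.sin (thetaA b 1)) - Real.log (Real.sin (thetaA a 1))) + (Real.log (Real.sin (thetaA b 2)) - Real.log (Real.sin (thetaA a 2))))/2) := by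
    linarith [la0, la1, la2, lb0, lb1, lb2]
  have diff1 : Real.log (a 1) - Real.log (b 1) = -((Real.log (Real.sin (thetaA b 1)) - Real.log (Real.sin (thetaA a 1))) - ((Real.log (Real.sin (thetaA b 0)) - Real.log (Real.sin (thetaA a 0))) + (Real.log (Real.sin (thetaA b 1)) - Real.log (Real.sin (thetaA a 1))) + (Real.log (Real.sin (thetaA b 2)) - Real.log (Real.sin (thetaA a 2))))/2) := by
    linarith [la0, la1, la2, lb0, lb1, lb2]
  have diff2 : Real.log (a 2) - Real.log (b 2) = -((Real.log (Real.sin (thetaA b 2)) - Real.log (Real.sin (thetaA a 2))) - ((Real.log (Real.sin (thetaA b 0)) - Real.log (Real.sin (thetaA a 0))) + (Real.log (Real.sin (thetaA b 1)) - Real.log (Real.sin (thetaA a 1))) + (Real.log (Real.sin (thetaA b 2)) - Real.log (Real.sin (thetaA a 2))))/2) := by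
    linarith [la0, la1, la2, lb0, lb1, lb2]
  have hsina : ∀ j, 0 < Real.sin (thetaA a j) :=
    fun j => Real.sin_pos_of_pos_of_lt_pi (hma j).1 (by linarith [(hma j).2])
  have hsinb : ∀ j, 0 < Real.sin (thetaA b j) :=
    fun j => Real.sin_pos_of_pos_of_lt_pi (hmb j).1 (by linarith [(hmb j).2])
  have hmema : ∀ j, thetaA a j ∈ Set.Icc (-(Real.pi/2)) (Real.pi/2) :=
    fun j => ⟨by linarith [(hma j).1], (hma j).2.le⟩
  have hmemb : ∀ j, thetaA b j ∈ Set.Icc (-(Real.pi/2)) (Real.pi/2) :=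
    fun j => ⟨by linarith [(hmb j).1], (hmb j).2.le⟩
  have mono_ab : ∀ j : Fin 3, thetaA b j ≤ thetaA a j →
      Real.log (Real.sin (thetaA b j)) - Real.log (Real.sin (thetaA a j)) ≤ 0 := by
    intro j hj
    have hm := Real.strictMonoOn_sin.monotoneOn (hmemb j) (hmema j) hj
    have := Real.log_le_log (hsinb j) hm
    linarith
  have mono_ba : ∀ j : Fin 3, thetaA a j ≤ thetaA b j →
      0 ≤ Real.log (Real.sin (thetaA b j)) - Real.log (Real.sin (thetaA a j)) := by
    intro j hj
    have hm := Real.strictMonoOn_sin.monotoneOn (hmema j) (hmemb j) hj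
    have := Real.log_le_log (hsina j) hm
    linarith
  have hs1 : (Real.log (Real.sin (thetaA b 0)) - Real.log (Real.sin (thetaA a 0))) ≤ 0 ∨ (Real.log (Real.sin (thetaA b 1)) - Real.log (Real.sin (thetaA a 1))) ≤ 0 ∨ (Real.log (Real.sin (thetaA b 2)) - Real.log (Real.sin (thetaA a 2))) ≤ 0 := by
    by_contra hcon
    push_neg at hcon
    obtain ⟨p0, p1, p2⟩ := hcon
    have q0 : thetaA a 0 < thetaA b 0 := by
      by_contra hq
      push_neg at hq
      linarith [mono_ab 0 hq]
    have q1 : thetaA a 1 < thetaA b 1 := by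
      by_contra hq
      push_neg at hq
      linarith [mono_ab 1 hq]
    have q2 : thetaA a 2 < thetaA b 2 := by
      by_contra hq
      push_neg at hq
      linarith [mono_ab 2 hq]
    linarith
  have hs2 : (0 ≤ (Real.log (Real.sin (thetaA b 0)) - Real.log (Real.sin (thetaA a 0)))) ∨ (0 ≤ (Real.log (Real.sin (thetaA b 1)) - Real.log (Real.sin (thetaA a 1)))) ∨ (0 ≤ (Real.log (Real.sin (thetaA b 2)) - Real.log (Real.sin (thetaA a 2)))) := by
    by_contra hcon
    push_neg at hcon
    obtain ⟨p0, p1, p2⟩ := hcon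
    have q0 : thetaA b 0 < thetaA a 0 := by
      by_contra hq
      push_neg at hq
      linarith [mono_ba 0 hq]
    have q1 : thetaA b 1 < thetaA a 1 := by
      by_contra hq
      push_neg at hq
      linarith [mono_ba 1 hq]
    have q2 : thetaA b 2 < thetaA a 2 := by
      by_contra hq
      push_neg at hq
      linarith [mono_ba 2 hq]
    linarith
  have hdd : dd a b = (|(Real.log (Real.sin (thetaA b 0)) - Real.log (Real.sin (thetaA a 0)))| + |(Real.log (Real.sin (thetaA b 1)) - Real.log (Real.sin (thetaA a 1)))| + |(Real.log (Real.sin (thetaA b 2)) - Real.log (Real.sin (thetaA a 2)))|)/2 := by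
    show max |Real.log (a 0) - Real.log (b 0)|
      (max |Real.log (a 1) - Real.log (b 1)| |Real.log (a 2) - Real.log (b 2)|) = _
    rw [diff0, diff1, diff2, abs_neg, abs_neg, abs_neg]
    exact Stmt18Aux.maxabs (Real.log (Real.sin (thetaA b 0)) - Real.log (Real.sin (thetaA a 0))) (Real.log (Real.sin (thetaA b 1)) - Real.log (Real.sin (thetaA a 1))) (Real.log (Real.sin (thetaA b 2)) - Real.log (Real.sin (thetaA a 2))) hs1 hs2
  have hc0 : Stmt18Aux.cpath A (thetaA a) (thetaA b) 0 = a := by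
    funext i
    have hth : ∀ j, Stmt18Aux.thq (thetaA a) (thetaA b) 0 j = thetaA a j := by
      intro j
      simp [Stmt18Aux.thq]
    have hLL : Stmt18Aux.LL (thetaA a) (thetaA b) 0 i
        = Real.log (a i) - Real.log (2*A)/2 := by
      simp only [Stmt18Aux.LL, hth]
      have := Stmt18Aux.log_edge hA ha i
      linarith
    show Real.sqrt (2*A) * Real.exp (Stmt18Aux.LL (thetaA a) (thetaA b) 0 i) = a i
    rw [hLL]
    have hsq : Real.exp (Real.log (2*A)/2) = Real.sqrt (2*A) := by
      rw [← Real.log_sqrt (by linarith : (0:ℝ) ≤ 2*A),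
        Real.exp_log (Real.sqrt_pos.mpr (by linarith))]
    rw [Real.exp_sub, Real.exp_log (ha.1.1 i), hsq]
    field_simp
  have hc1 : Stmt18Aux.cpath A (thetaA a) (thetaA b) 1 = b := by
    funext i
    have hth : ∀ j, Stmt18Aux.thq (thetaA a) (thetaA b) 1 j = thetaA b j := by
      intro j
      simp only [Stmt18Aux.thq]
      ring
    have hLL : Stmt18Aux.LL (thetaA a) (thetaA b) 1 i
        = Real.log (b i) - Real.log (2*A)/2 := by
      simp only [Stmt18Aux.LL, hth]
      have := Stmt18Aux.log_edge hA hb i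
      linarith
    show Real.sqrt (2*A) * Real.exp (Stmt18Aux.LL (thetaA a) (thetaA b) 1 i) = b i
    rw [hLL]
    have hsq : Real.exp (Real.log (2*A)/2) = Real.sqrt (2*A) := by
      rw [← Real.log_sqrt (by linarith : (0:ℝ) ≤ 2*A),
        Real.exp_log (Real.sqrt_pos.mpr (by linarith))]
    rw [Real.exp_sub, Real.exp_log (hb.1.1 i), hsq]
    field_simp
  have hwit : dd a b ∈ {l : ℝ | ∃ c c' : ℝ → (Fin 3 → ℝ),
      (∀ t ∈ Set.Icc (0:ℝ) 1, HasDerivWithinAt c (c' t) (Set.Icc 0 1) t) ∧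
      ContinuousOn c' (Set.Icc 0 1) ∧
      (∀ t ∈ Set.Icc (0:ℝ) 1, c t ∈ XAc A) ∧
      c 0 = a ∧ c 1 = b ∧
      l = ∫ t in (0:ℝ)..1,
        max (|c' t 0| / c t 0) (max (|c' t 1| / c t 1) (|c' t 2| / c t 2))} := by
    refine ⟨Stmt18Aux.cpath A (thetaA a) (thetaA b),
      fun t => Stmt18Aux.cpath' A (thetaA a) (thetaA b) t, ?_, ?_, ?_, hc0, hc1, ?_⟩
    · intro t ht
      exact hasDerivWithinAt_pi.mpr
        (fun i => (Stmt18Aux.cpath_hasDeriv hma hmb hsuma hsumb ht i).hasDerivWithinAt)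
    · exact Stmt18Aux.cpath'_contOn hma hmb hsuma hsumb
    · intro t ht
      exact Stmt18Aux.cpath_mem hma hmb hsuma hsumb hA ht
    · rw [hdd, Stmt18Aux.cpath_integral hma hmb hsuma hsumb hA]
  have hlb : ∀ l ∈ {l : ℝ | ∃ c c' : ℝ → (Fin 3 → ℝ),
      (∀ t ∈ Set.Icc (0:ℝ) 1, HasDerivWithinAt c (c' t) (Set.Icc 0 1) t) ∧
      ContinuousOn c' (Set.Icc 0 1) ∧
      (∀ t ∈ Set.Icc (0:ℝ) 1, c t ∈ XAc A) ∧
      c 0 = a ∧ c 1 = b ∧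
      l = ∫ t in (0:ℝ)..1,
        max (|c' t 0| / c t 0) (max (|c' t 1| / c t 1) (|c' t 2| / c t 2))}, dd a b ≤ l := by
    rintro l ⟨c, c', hd, hc, hm, hc0', hc1', rfl⟩
    exact Stmt18Aux.lower_bound hA ha hb hd hc hm hc0' hc1'
  exact le_antisymm (le_csInf ⟨dd a b, hwit⟩ hlb) (csInf_le ⟨dd a b, hlb⟩ hwit)
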